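/- arXiv:math/0401374 — 4 statements merged into one kernel-verified Lean document; each statement's English description precedes it below -/
import Mathlib

section
/- For every n ≥ 0, the number of solutions of x·y ≡ 0 (mod p^{n+1}) in (Z/p^{n+1}Z)^2 equals (n+2)·p^{n+1} − (n+1)·p^n. -/
/-!
In `ZMod m` the annihilator of `x` is the kernel of `y ↦ x * y`, whose image is the cyclic group
generated by `x` of order `m / gcd(m, x)`; so it has `gcd(m, x)` elements, and the number of
solutions is Pillai's sum `∑_{i<m} gcd(m, i) = ∑_{d ∣ m} d φ(m / d)`. For `m = p^(n+1)` the
divisor `p^(n+1)` contributes `p^(n+1)` and each of the other `n + 1` divisors contributes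
`p^n (p - 1)`.
-/

open Finset Nat

theorem Nat.sum_range_gcd (m : ℕ) :
    ∑ i ∈ range m, m.gcd i = ∑ d ∈ m.divisors, d * φ (m / d) := by
  rcases m.eq_zero_or_pos with rfl | hm
  · simp
  rw [← sum_fiberwise_of_maps_to (g := m.gcd) (t := m.divisors)
    fun i _ => Nat.mem_divisors.2 ⟨Nat.gcd_dvd_left m i, hm.ne'⟩]
  refine sum_congr rfl fun d hd => ?_
  rw [Nat.totient_div_of_dvd (Nat.dvd_of_mem_divisors hd), card_eq_sum_ones, mul_sum, mul_one]
  exact sum_congr rfl fun i hi => (mem_filter.1 hi).2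

theorem Nat.sum_divisors_prime_pow_mul_totient {p : ℕ} (hp : p.Prime) (n : ℕ) :
    ∑ d ∈ (p ^ (n + 1)).divisors, d * φ (p ^ (n + 1) / d) =
      p ^ (n + 1) + (n + 1) * (p ^ n * (p - 1)) := by
  rw [Nat.sum_divisors_prime_pow hp, sum_range_succ, Nat.div_self (pow_pos hp.pos _), totient_one,
    mul_one, add_comm, sum_const_nat (m := p ^ n * (p - 1)), card_range]
  intro i hi
  have hi : i ≤ n := Nat.lt_succ_iff.1 (mem_range.1 hi)
  rw [Nat.pow_div (by omega) hp.pos, show n + 1 - i = (n - i) + 1 by omega,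
    totient_prime_pow_succ hp, ← mul_assoc, ← pow_add, Nat.add_sub_cancel' hi]

theorem ZMod.range_mulLeft (m : ℕ) (x : ZMod m) :
    (AddMonoidHom.mulLeft x).range = AddSubgroup.zmultiples x := by
  ext z
  constructor
  · rintro ⟨y, rfl⟩
    obtain ⟨k, rfl⟩ := ZMod.intCast_surjective y
    exact ⟨k, by simp [zsmul_eq_mul, mul_comm]⟩
  · rintro ⟨k, rfl⟩
    exact ⟨k, by simp [zsmul_eq_mul, mul_comm]⟩

theorem ZMod.card_subtype_mul_eq_zero (m : ℕ) [NeZero m] (x : ZMod m) :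
    Nat.card {y : ZMod m // x * y = 0} = m.gcd x.val := by
  have hx : addOrderOf x = m / m.gcd x.val := by
    rw [← ZMod.addOrderOf_coe _ (NeZero.ne m), ZMod.natCast_zmod_val]
  have key := (AddMonoidHom.mulLeft x).ker.card_mul_index
  rw [AddSubgroup.index_ker, ZMod.range_mulLeft, Nat.card_zmultiples, hx, Nat.card_zmod] at key
  refine Nat.eq_of_mul_eq_mul_right ?_
    (key.trans (Nat.mul_div_cancel' (Nat.gcd_dvd_left m x.val)).symm)
  exact Nat.pos_of_ne_zero fun h => NeZero.ne m (by rw [← key, h, mul_zero])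

theorem ZMod.sum_val {M : Type*} [AddCommMonoid M] (m : ℕ) [NeZero m] (f : ℕ → M) :
    ∑ x : ZMod m, f x.val = ∑ i ∈ range m, f i := by
  obtain ⟨k, rfl⟩ := Nat.exists_eq_succ_of_ne_zero (NeZero.ne m)
  exact Fin.sum_univ_eq_sum_range f (k + 1)

theorem ZMod.card_subtype_prod_mul_eq_zero (m : ℕ) [NeZero m] :
    Nat.card {z : ZMod m × ZMod m // z.1 * z.2 = 0} = ∑ i ∈ range m, m.gcd i := by
  rw [Nat.card_congr (Equiv.subtypeProdEquivSigmaSubtype fun a b : ZMod m => a * b = 0),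
    Nat.card_sigma]
  simp_rw [ZMod.card_subtype_mul_eq_zero]
  exact ZMod.sum_val m m.gcd

/-- The number of solutions of `x*y ≡ 0 (mod p^(n+1))` in `(ℤ/p^(n+1)ℤ)²`
equals `(n+2)·p^(n+1) − (n+1)·p^n`. -/
theorem stmt_0 (p : ℕ) (hp : p.Prime) (n : ℕ) :
    Nat.card {z : ZMod (p ^ (n + 1)) × ZMod (p ^ (n + 1)) // z.1 * z.2 = 0} =
      (n + 2) * p ^ (n + 1) - (n + 1) * p ^ n := by
  have : NeZero (p ^ (n + 1)) := ⟨pow_ne_zero _ hp.ne_zero⟩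
  rw [ZMod.card_subtype_prod_mul_eq_zero, Nat.sum_range_gcd,
    Nat.sum_divisors_prime_pow_mul_totient hp]
  obtain ⟨q, rfl⟩ : ∃ q, p = q + 1 := Nat.exists_eq_succ_of_ne_zero hp.ne_zero
  refine (Nat.sub_eq_of_eq_add ?_).symm
  rw [Nat.add_sub_cancel]
  ring
end

section
/- The number of solutions of y^2 ≡ x^3 mod p^{n+1} in (Z/p^{n+1}Z)^2, for n = 2, 3, 4, equals p^n(2p−1). -/
open Finset

private lemma root_dvd {p Y e j k : ℕ} (hp : p.Prime) (h : p ^ k ∣ Y ^ e)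
    (hjk : e * (j - 1) < k) : p ^ j ∣ Y := by
  rcases eq_or_ne Y 0 with rfl | hY
  · exact dvd_zero _
  · rw [hp.pow_dvd_iff_le_factorization (pow_ne_zero e hY),
      Nat.factorization_pow] at h
    rw [hp.pow_dvd_iff_le_factorization hY]
    simp only [Finsupp.smul_apply, smul_eq_mul] at h
    by_contra hc
    push_neg at hc
    have : e * Y.factorization p ≤ e * (j - 1) := Nat.mul_le_mul_left e (by omega)
    omega

private lemma md_trans {A B n : ℕ} (h : A ≡ B [MOD n]) (hB : n ∣ B) : n ∣ A :=
  Nat.modEq_zero_iff_dvd.1 (h.trans (Nat.modEq_zero_iff_dvd.2 hB))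

private lemma count_range_dvd (n d : ℕ) (hd0 : 0 < d) (hd : d ∣ n) :
    ((Finset.range n).filter (d ∣ ·)).card = n / d := by
  have he : (Finset.range n).filter (d ∣ ·) = (Finset.range (n / d)).image (d * ·) := by
    ext i
    simp only [mem_filter, mem_range, mem_image]
    constructor
    · rintro ⟨hi, c, rfl⟩
      exact ⟨c, by rw [Nat.lt_div_iff_mul_lt' hd]; omega, rfl⟩
    · rintro ⟨c, hc, rfl⟩
      rw [Nat.lt_div_iff_mul_lt' hd] at hc
      exact ⟨hc, c, rfl⟩
  rw [he, Finset.card_image_of_injective _ fun a b hab => by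
    simpa [hd0.ne'] using hab, Finset.card_range]

private lemma count_val_dvd (n d : ℕ) [NeZero n] (hd0 : 0 < d) (hd : d ∣ n) :
    (Finset.univ.filter fun x : ZMod n => d ∣ x.val).card = n / d := by
  rw [← count_range_dvd n d hd0 hd]
  apply Finset.card_bij (fun x _ => x.val)
  · intro x hx
    simp only [mem_filter, mem_range]
    exact ⟨ZMod.val_lt x, (mem_filter.1 hx).2⟩
  · intro a _ b _ h
    exact ZMod.val_injective n h
  · intro j hj
    simp only [mem_filter, mem_range] at hj
    refine ⟨(j : ZMod n), ?_, ZMod.val_cast_of_lt hj.1⟩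
    simp only [mem_filter, mem_univ, true_and]
    rw [ZMod.val_cast_of_lt hj.1]
    exact hj.2

private lemma count_main (p m a b : ℕ) (hp : p.Prime) (hm : 1 ≤ m)
    (ha : a ≤ m) (hb : b ≤ m) (ha1 : 1 ≤ a) (h3a : m ≤ 3 * a) (h2b : m ≤ 2 * b)
    (hfwd : ∀ X Y : ℕ, p ∣ X → Y ^ 2 ≡ X ^ 3 [MOD p ^ m] → p ^ a ∣ X ∧ p ^ b ∣ Y) :
    Nat.card {z : ZMod (p ^ m) × ZMod (p ^ m) // z.2 ^ 2 = z.1 ^ 3} =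
      p ^ (m - 1) * (p - 1) + p ^ (m - a) * p ^ (m - b) := by
  have hp1 := hp.one_lt
  have hNpos : 0 < p ^ m := pow_pos hp.pos m
  haveI : NeZero (p ^ m) := ⟨hNpos.ne'⟩
  have hvalcast : ∀ x : ZMod (p ^ m), ((x.val : ℕ) : ZMod (p ^ m)) = x := fun x => by
    rw [ZMod.natCast_val, ZMod.cast_id]
  have heq_iff : ∀ z : ZMod (p ^ m) × ZMod (p ^ m),
      z.2 ^ 2 = z.1 ^ 3 ↔ z.2.val ^ 2 ≡ z.1.val ^ 3 [MOD p ^ m] := by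
    intro z
    rw [← ZMod.natCast_eq_natCast_iff]
    push_cast
    rw [hvalcast, hvalcast]
  classical
  -- the "unit" part
  have hU : ((Finset.univ.filter
        fun z : ZMod (p ^ m) × ZMod (p ^ m) => z.2 ^ 2 = z.1 ^ 3).filter
        fun z => ¬ p ∣ z.1.val).card = p ^ (m - 1) * (p - 1) := by
    have hcard : ((Finset.univ.filter
        fun z : ZMod (p ^ m) × ZMod (p ^ m) => z.2 ^ 2 = z.1 ^ 3).filter
        fun z => ¬ p ∣ z.1.val).card = Fintype.card (ZMod (p ^ m))ˣ := by
      rw [← Finset.card_univ]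
      symm
      apply Finset.card_bij
        (fun (u : (ZMod (p ^ m))ˣ) _ => (((u : ZMod (p ^ m)) ^ 2, (u : ZMod (p ^ m)) ^ 3)))
      · intro u _
        simp only [mem_filter, mem_univ, true_and]
        refine ⟨by ring, ?_⟩
        intro hdvd
        have hco : Nat.Coprime ((u ^ 2 : (ZMod (p ^ m))ˣ) : ZMod (p ^ m)).val (p ^ m) :=
          ZMod.val_coe_unit_coprime (u ^ 2)
        rw [Units.val_pow_eq_pow_val] at hco
        have hpd : p ∣ Nat.gcd ((u : ZMod (p ^ m)) ^ 2).val (p ^ m) :=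
          Nat.dvd_gcd hdvd (dvd_pow_self p (by omega))
        rw [Nat.Coprime] at hco
        rw [hco] at hpd
        exact absurd (Nat.le_of_dvd one_pos hpd) (by omega)
      · intro u _ v _ h
        rw [Prod.mk.injEq] at h
        have h2 : u ^ 2 = v ^ 2 := Units.ext (by push_cast; exact h.1)
        have h3 : u ^ 3 = v ^ 3 := Units.ext (by push_cast; exact h.2)
        calc u = u ^ 3 * (u ^ 2)⁻¹ := by group
          _ = v ^ 3 * (v ^ 2)⁻¹ := by rw [h2, h3]
          _ = v := by group
      · intro z hz
        simp only [mem_filter, mem_univ, true_and] at hz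
        obtain ⟨heq, hnd⟩ := hz
        have hx : IsUnit z.1 := by
          rw [← hvalcast z.1]
          exact (ZMod.isUnit_iff_coprime _ _).2
            ((((Nat.Prime.coprime_iff_not_dvd hp).2 hnd).symm).pow_right m)
        have hy : IsUnit z.2 := by
          have h2 : IsUnit (z.2 * z.2) := by
            have : z.2 * z.2 = z.1 ^ 3 := by rw [← sq]; exact heq
            rw [this]
            exact hx.pow 3
          exact isUnit_of_mul_isUnit_left h2
        obtain ⟨ux, hux⟩ := hx
        obtain ⟨uy, huy⟩ := hy
        have key : uy ^ 2 = ux ^ 3 := Units.ext (by push_cast [hux, huy]; exact heq)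
        refine ⟨uy * ux⁻¹, Finset.mem_univ _, ?_⟩
        have e1 : (uy * ux⁻¹) ^ 2 = ux := by
          rw [mul_pow, key]; group
        have e2 : (uy * ux⁻¹) ^ 3 = uy := by
          rw [mul_pow, inv_pow, ← key]; group
        have c1 : ((uy * ux⁻¹ : (ZMod (p ^ m))ˣ) : ZMod (p ^ m)) ^ 2 = z.1 := by
          rw [← Units.val_pow_eq_pow_val, e1, hux]
        have c2 : ((uy * ux⁻¹ : (ZMod (p ^ m))ˣ) : ZMod (p ^ m)) ^ 3 = z.2 := by
          rw [← Units.val_pow_eq_pow_val, e2, huy]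
        rw [c1, c2]
    rw [hcard, ZMod.card_units_eq_totient, Nat.totient_prime_pow hp (by omega)]
  -- the "singular" part
  have hD : ((Finset.univ.filter
        fun z : ZMod (p ^ m) × ZMod (p ^ m) => z.2 ^ 2 = z.1 ^ 3).filter
        fun z => p ∣ z.1.val).card = p ^ (m - a) * p ^ (m - b) := by
    have hset : (Finset.univ.filter
        fun z : ZMod (p ^ m) × ZMod (p ^ m) => z.2 ^ 2 = z.1 ^ 3).filter
        (fun z => p ∣ z.1.val) =
        Finset.univ.filter (fun z : ZMod (p ^ m) × ZMod (p ^ m) =>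
          p ^ a ∣ z.1.val ∧ p ^ b ∣ z.2.val) := by
      ext z
      simp only [Finset.filter_filter, mem_filter, mem_univ, true_and]
      constructor
      · rintro ⟨heq, hdvd⟩
        exact hfwd _ _ hdvd ((heq_iff z).1 heq)
      · rintro ⟨hX, hY⟩
        have h1 : p ^ m ∣ z.1.val ^ 3 := by
          refine dvd_trans (pow_dvd_pow p (by omega : m ≤ a * 3)) ?_
          rw [pow_mul]
          exact pow_dvd_pow_of_dvd hX 3
        have h2 : p ^ m ∣ z.2.val ^ 2 := by
          refine dvd_trans (pow_dvd_pow p (by omega : m ≤ b * 2)) ?_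
          rw [pow_mul]
          exact pow_dvd_pow_of_dvd hY 2
        refine ⟨?_, dvd_trans (dvd_pow_self p (by omega : a ≠ 0)) hX⟩
        rw [heq_iff]
        exact (Nat.modEq_zero_iff_dvd.2 h2).trans (Nat.modEq_zero_iff_dvd.2 h1).symm
    rw [hset]
    have hprod : Finset.univ.filter (fun z : ZMod (p ^ m) × ZMod (p ^ m) =>
          p ^ a ∣ z.1.val ∧ p ^ b ∣ z.2.val) =
        (Finset.univ.filter fun x : ZMod (p ^ m) => p ^ a ∣ x.val) ×ˢ
        (Finset.univ.filter fun y : ZMod (p ^ m) => p ^ b ∣ y.val) := by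
      ext z
      simp only [mem_filter, mem_univ, true_and, Finset.mem_product]
    rw [hprod, Finset.card_product,
      count_val_dvd _ _ (pow_pos hp.pos a) (pow_dvd_pow p ha),
      count_val_dvd _ _ (pow_pos hp.pos b) (pow_dvd_pow p hb),
      Nat.pow_div ha hp.pos, Nat.pow_div hb hp.pos]
  rw [Nat.card_eq_fintype_card, Fintype.card_subtype,
    ← Finset.card_filter_add_card_filter_not
      (p := fun z : ZMod (p ^ m) × ZMod (p ^ m) => p ∣ z.1.val), hD, hU, Nat.add_comm]

/-- For `n = 2, 3, 4`, the number of solutions of `y² ≡ x³ (mod p^(n+1))` in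
`(ℤ/p^(n+1)ℤ)²` equals `p^n (2p−1)`. -/
theorem stmt_5 (p : ℕ) (hp : p.Prime) :
    ∀ n ∈ ({2, 3, 4} : Set ℕ),
      Nat.card {z : ZMod (p ^ (n + 1)) × ZMod (p ^ (n + 1)) // z.2 ^ 2 = z.1 ^ 3} =
        p ^ n * (2 * p - 1) := by
  have hfin : ∀ m a b : ℕ, m - 1 + 1 = m → m - a + (m - b) = m →
      p ^ (m - 1) * (p - 1) + p ^ (m - a) * p ^ (m - b) = p ^ (m - 1) * (2 * p - 1) := by
    intro m a b hm hab
    have hps : p ^ m = p ^ (m - 1) * p := by rw [← pow_succ, hm]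
    rw [← pow_add, hab, hps, ← Nat.mul_add,
      show p - 1 + p = 2 * p - 1 by have := hp.pos; omega]
  intro n hn
  simp only [Set.mem_insert_iff, Set.mem_singleton_iff] at hn
  rcases hn with rfl | rfl | rfl
  · rw [show (2 : ℕ) + 1 = 3 from rfl, count_main p 3 1 2 hp (by omega) (by omega) (by omega)
      (by omega) (by omega) (by omega) ?_, hfin 3 1 2 (by omega) (by omega)]
    intro X Y hX h
    have hX3 : p ^ 3 ∣ X ^ 3 := pow_dvd_pow_of_dvd hX 3
    have hY2 : p ^ 3 ∣ Y ^ 2 := md_trans h hX3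
    exact ⟨by simpa using hX, root_dvd hp hY2 (by norm_num)⟩
  · rw [show (3 : ℕ) + 1 = 4 from rfl, count_main p 4 2 2 hp (by omega) (by omega) (by omega)
      (by omega) (by omega) (by omega) ?_, hfin 4 2 2 (by omega) (by omega)]
    intro X Y hX h
    have hX3 : p ^ 3 ∣ X ^ 3 := pow_dvd_pow_of_dvd hX 3
    have hY2 : p ^ 3 ∣ Y ^ 2 := md_trans (h.of_dvd (pow_dvd_pow p (by omega))) hX3
    have hYd : p ^ 2 ∣ Y := root_dvd hp hY2 (by norm_num)
    have hY4 : p ^ 4 ∣ Y ^ 2 := by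
      rw [show (4 : ℕ) = 2 * 2 from rfl, pow_mul]
      exact pow_dvd_pow_of_dvd hYd 2
    have hX4 : p ^ 4 ∣ X ^ 3 := md_trans h.symm hY4
    exact ⟨root_dvd hp hX4 (by norm_num), hYd⟩
  · rw [show (4 : ℕ) + 1 = 5 from rfl, count_main p 5 2 3 hp (by omega) (by omega) (by omega)
      (by omega) (by omega) (by omega) ?_, hfin 5 2 3 (by omega) (by omega)]
    intro X Y hX h
    have hX3 : p ^ 3 ∣ X ^ 3 := pow_dvd_pow_of_dvd hX 3
    have hY2 : p ^ 3 ∣ Y ^ 2 := md_trans (h.of_dvd (pow_dvd_pow p (by omega))) hX3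
    have hYd : p ^ 2 ∣ Y := root_dvd hp hY2 (by norm_num)
    have hY4 : p ^ 4 ∣ Y ^ 2 := by
      rw [show (4 : ℕ) = 2 * 2 from rfl, pow_mul]
      exact pow_dvd_pow_of_dvd hYd 2
    have hX4 : p ^ 4 ∣ X ^ 3 := md_trans (h.symm.of_dvd (pow_dvd_pow p (by omega))) hY4
    have hXd : p ^ 2 ∣ X := root_dvd hp hX4 (by norm_num)
    have hX6 : p ^ 5 ∣ X ^ 3 := by
      refine dvd_trans (pow_dvd_pow p (by omega : 5 ≤ 2 * 3)) ?_
      rw [pow_mul]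
      exact pow_dvd_pow_of_dvd hXd 3
    have hY5 : p ^ 5 ∣ Y ^ 2 := md_trans h hX6
    exact ⟨hXd, root_dvd hp hY5 (by norm_num)⟩
end

section
/- The number of solutions of y^2 ≡ x^3 mod p^6 in (Z/p^6Z)^2 equals p^5(p^2 + p − 1). -/
section aux

variable {p : ℕ}

/-- Injectivity of `a ↦ p^k * a.val : ZMod (p^m) → ZMod (p^(k+m))`. -/
lemma aux_inj (hp : p.Prime) {k m : ℕ} {a b : ZMod (p ^ m)}
    (h : ((p ^ k * a.val : ℕ) : ZMod (p ^ (k + m))) = ((p ^ k * b.val : ℕ) : ZMod (p ^ (k + m)))) :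
    a = b := by
  haveI : NeZero (p ^ m) := ⟨pow_ne_zero _ hp.ne_zero⟩
  rw [ZMod.natCast_eq_natCast_iff] at h
  have hd : ((p ^ (k + m) : ℕ) : ℤ) ∣ ((p ^ k * b.val : ℕ) : ℤ) - ((p ^ k * a.val : ℕ) : ℤ) :=
    h.dvd
  have hd' : (p : ℤ) ^ k * (p : ℤ) ^ m ∣ (p : ℤ) ^ k * ((b.val : ℤ) - (a.val : ℤ)) := by
    push_cast [pow_add] at hd
    rw [mul_sub]
    exact hd
  have hpk : ((p : ℤ)) ^ k ≠ 0 := pow_ne_zero _ (Int.natCast_ne_zero.mpr hp.ne_zero)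
  have h3 : (p : ℤ) ^ m ∣ (b.val : ℤ) - (a.val : ℤ) :=
    (mul_dvd_mul_iff_left hpk).mp hd'
  have hav := ZMod.val_lt a
  have hbv := ZMod.val_lt b
  have hveq : a.val = b.val := by
    rcases h3 with ⟨c, hc⟩
    have hpm : (0:ℤ) < (p:ℤ)^m := by exact_mod_cast pow_pos hp.pos m
    have h4 : (a.val : ℤ) < (p:ℤ)^m := by exact_mod_cast hav
    have h5 : (b.val : ℤ) < (p:ℤ)^m := by exact_mod_cast hbv
    have ha0 : (0:ℤ) ≤ (a.val : ℤ) := Int.natCast_nonneg _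
    have hb0 : (0:ℤ) ≤ (b.val : ℤ) := Int.natCast_nonneg _
    have hc0 : c = 0 := by nlinarith
    have : (a.val : ℤ) = (b.val : ℤ) := by
      have := hc
      rw [hc0, mul_zero] at this
      omega
    exact_mod_cast this
  exact ZMod.val_injective _ hveq

/-- Classification: a solution with non-unit `x` has `p² ∣ x.val` and `p³ ∣ y.val`. -/
lemma aux_classify (hp : p.Prime) (x y : ZMod (p ^ 6)) (h : y ^ 2 = x ^ 3)
    (hx : ¬ IsUnit x) : p ^ 2 ∣ x.val ∧ p ^ 3 ∣ y.val := by
  haveI : NeZero (p ^ 6) := ⟨pow_ne_zero _ hp.ne_zero⟩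
  have hpZ : Prime (p : ℤ) := Nat.prime_iff_prime_int.mp hp
  set X : ℤ := (x.val : ℤ) with hX
  set Y : ℤ := (y.val : ℤ) with hY
  -- the congruence in ℤ
  have hmod : (p : ℤ) ^ 6 ∣ Y ^ 2 - X ^ 3 := by
    have hx' : ((x.val : ℕ) : ZMod (p ^ 6)) = x := ZMod.natCast_rightInverse x
    have hy' : ((y.val : ℕ) : ZMod (p ^ 6)) = y := ZMod.natCast_rightInverse y
    have hz : ((Y ^ 2 - X ^ 3 : ℤ) : ZMod (p ^ 6)) = 0 := by
      push_cast [hX, hY, hx', hy']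
      rw [h]; ring
    have := (ZMod.intCast_zmod_eq_zero_iff_dvd _ _).mp hz
    exact_mod_cast this
  -- p ∣ X
  have hnd : p ∣ x.val := by
    by_contra hnd
    refine hx ?_
    rw [← ZMod.natCast_rightInverse x]
    exact (ZMod.isUnit_iff_coprime _ _).mpr
      (Nat.Coprime.pow_right _ ((Nat.Prime.coprime_iff_not_dvd hp).mpr hnd).symm)
  have hpX : (p : ℤ) ∣ X := by rw [hX]; exact_mod_cast Int.natCast_dvd_natCast.mpr hnd
  -- p² ∣ X
  have hp2X : (p : ℤ) ^ 2 ∣ X := by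
    rcases hpX with ⟨X1, hX1⟩
    by_contra hcon
    have hpX1 : ¬ (p : ℤ) ∣ X1 := by
      rintro ⟨X2, hX2⟩
      exact hcon ⟨X2, by rw [hX1, hX2]; ring⟩
    have h1 : (p : ℤ) ^ 6 ∣ Y ^ 2 - (p:ℤ) ^ 3 * X1 ^ 3 := by
      have heq : Y ^ 2 - (p:ℤ) ^ 3 * X1 ^ 3 = Y ^ 2 - X ^ 3 := by rw [hX1]; ring
      rw [heq]; exact hmod
    have hpY : (p : ℤ) ∣ Y := by
      apply hpZ.dvd_of_dvd_pow (n := 2)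
      have ha : (p:ℤ) ∣ Y ^ 2 - (p:ℤ) ^ 3 * X1 ^ 3 :=
        dvd_trans (dvd_pow_self _ (by norm_num)) h1
      have hb : (p:ℤ) ∣ (p:ℤ)^3 * X1 ^ 3 := Dvd.dvd.mul_right (dvd_pow_self _ (by norm_num)) _
      have := dvd_add ha hb
      simpa using this
    rcases hpY with ⟨Y1, hY1⟩
    have h2 : (p : ℤ) ^ 4 ∣ Y1 ^ 2 - (p:ℤ) * X1 ^ 3 := by
      have heq : (p:ℤ)^2 * (Y1 ^ 2 - (p:ℤ) * X1 ^ 3) = Y ^ 2 - (p:ℤ) ^ 3 * X1 ^ 3 := by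
        rw [hY1]; ring
      have h6 : (p:ℤ)^2 * (p:ℤ)^4 ∣ (p:ℤ)^2 * (Y1 ^ 2 - (p:ℤ) * X1 ^ 3) := by
        rw [heq, show (p:ℤ)^2 * (p:ℤ)^4 = (p:ℤ)^6 by ring]; exact h1
      exact (mul_dvd_mul_iff_left (pow_ne_zero 2 hpZ.ne_zero)).mp h6
    have hpY1 : (p : ℤ) ∣ Y1 := by
      apply hpZ.dvd_of_dvd_pow (n := 2)
      have ha : (p:ℤ) ∣ Y1 ^ 2 - (p:ℤ) * X1 ^ 3 :=
        dvd_trans (dvd_pow_self _ (by norm_num)) h2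
      have hb : (p:ℤ) ∣ (p:ℤ) * X1 ^ 3 := Dvd.dvd.mul_right dvd_rfl _
      have := dvd_add ha hb
      simpa using this
    rcases hpY1 with ⟨Y2, hY2⟩
    have h3 : (p : ℤ) ^ 3 ∣ (p:ℤ) * Y2 ^ 2 - X1 ^ 3 := by
      have heq : (p:ℤ) * ((p:ℤ) * Y2 ^ 2 - X1 ^ 3) = Y1 ^ 2 - (p:ℤ) * X1 ^ 3 := by
        rw [hY2]; ring
      have h6 : (p:ℤ) * (p:ℤ)^3 ∣ (p:ℤ) * ((p:ℤ) * Y2 ^ 2 - X1 ^ 3) := by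
        rw [heq, show (p:ℤ) * (p:ℤ)^3 = (p:ℤ)^4 by ring]; exact h2
      exact (mul_dvd_mul_iff_left hpZ.ne_zero).mp h6
    have hdX13 : (p : ℤ) ∣ X1 ^ 3 := by
      have ha : (p:ℤ) ∣ (p:ℤ) * Y2 ^ 2 - X1 ^ 3 :=
        dvd_trans (dvd_pow_self _ (by norm_num)) h3
      have hb : (p:ℤ) ∣ (p:ℤ) * Y2 ^ 2 := Dvd.dvd.mul_right dvd_rfl _
      have := dvd_sub hb ha
      simpa using this
    exact hpX1 (hpZ.dvd_of_dvd_pow hdX13)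
  -- now p^6 ∣ Y²
  have hY2 : (p : ℤ) ^ 6 ∣ Y ^ 2 := by
    rcases hp2X with ⟨X2, hX2⟩
    have hc : (p:ℤ)^6 ∣ X ^ 3 := ⟨X2^3, by rw [hX2]; ring⟩
    have := dvd_add hmod hc
    simpa using this
  have hp3Y : (p : ℤ) ^ 3 ∣ Y := by
    have h1 : (p:ℤ) ∣ Y := hpZ.dvd_of_dvd_pow (dvd_trans (dvd_pow_self _ (by norm_num)) hY2)
    rcases h1 with ⟨Y1, hY1'⟩
    have h2 : (p:ℤ)^4 ∣ Y1 ^ 2 := by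
      have heq : (p:ℤ)^2 * Y1 ^ 2 = Y ^ 2 := by rw [hY1']; ring
      have h6 : (p:ℤ)^2 * (p:ℤ)^4 ∣ (p:ℤ)^2 * Y1 ^ 2 := by
        rw [heq, show (p:ℤ)^2*(p:ℤ)^4 = (p:ℤ)^6 by ring]; exact hY2
      exact (mul_dvd_mul_iff_left (pow_ne_zero 2 hpZ.ne_zero)).mp h6
    have h3 : (p:ℤ) ∣ Y1 := hpZ.dvd_of_dvd_pow (dvd_trans (dvd_pow_self _ (by norm_num)) h2)
    rcases h3 with ⟨Y2, hY2'⟩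
    have h4 : (p:ℤ)^2 ∣ Y2 ^ 2 := by
      have heq : (p:ℤ)^2 * Y2 ^ 2 = Y1 ^ 2 := by rw [hY2']; ring
      have h6 : (p:ℤ)^2 * (p:ℤ)^2 ∣ (p:ℤ)^2 * Y2 ^ 2 := by
        rw [heq, show (p:ℤ)^2*(p:ℤ)^2 = (p:ℤ)^4 by ring]; exact h2
      exact (mul_dvd_mul_iff_left (pow_ne_zero 2 hpZ.ne_zero)).mp h6
    have h5 : (p:ℤ) ∣ Y2 := hpZ.dvd_of_dvd_pow (dvd_trans (dvd_pow_self _ (by norm_num)) h4)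
    rcases h5 with ⟨Y3, hY3'⟩
    exact ⟨Y3, by rw [hY1', hY2', hY3']; ring⟩
  rw [hX] at hp2X
  rw [hY] at hp3Y
  constructor
  · have h1 : ((p^2 : ℕ) : ℤ) ∣ ((x.val : ℕ) : ℤ) := by exact_mod_cast hp2X
    exact_mod_cast h1
  · have h1 : ((p^3 : ℕ) : ℤ) ∣ ((y.val : ℕ) : ℤ) := by exact_mod_cast hp3Y
    exact_mod_cast h1

end aux

/-- The number of solutions of `y² ≡ x³ (mod p⁶)` in `(ℤ/p⁶ℤ)²` equals `p⁵(p²+p−1)`. -/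
theorem stmt_6 (p : ℕ) (hp : p.Prime) :
    Nat.card {z : ZMod (p ^ 6) × ZMod (p ^ 6) // z.2 ^ 2 = z.1 ^ 3} =
      p ^ 5 * (p ^ 2 + p - 1) := by
  haveI : NeZero (p ^ 6) := ⟨pow_ne_zero _ hp.ne_zero⟩
  haveI : NeZero (p ^ 4) := ⟨pow_ne_zero _ hp.ne_zero⟩
  haveI : NeZero (p ^ 3) := ⟨pow_ne_zero _ hp.ne_zero⟩
  set R := ZMod (p ^ 6) with hR
  have hp6 : ((p ^ 6 : ℕ) : R) = 0 := ZMod.natCast_self _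
  let f : (ZMod (p ^ 6))ˣ ⊕ (ZMod (p ^ 4) × ZMod (p ^ 3)) →
      {z : ZMod (p ^ 6) × ZMod (p ^ 6) // z.2 ^ 2 = z.1 ^ 3} :=
    Sum.elim
      (fun t => ⟨((t : R) ^ 2, (t : R) ^ 3), by ring⟩)
      (fun ab => ⟨(((p ^ 2 * ab.1.val : ℕ) : R), ((p ^ 3 * ab.2.val : ℕ) : R)), by
        show (((p ^ 3 * ab.2.val : ℕ) : R)) ^ 2 = (((p ^ 2 * ab.1.val : ℕ) : R)) ^ 3
        have h6 : ((p : R)) ^ 6 = 0 := by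
          rw [show ((p : R) ^ 6) = ((p^6 : ℕ) : R) by push_cast; ring, hp6]
        rw [Nat.cast_mul, Nat.cast_mul, Nat.cast_pow, Nat.cast_pow]
        rw [mul_pow, mul_pow, ← pow_mul, ← pow_mul]
        norm_num [h6]⟩)
  have hfbij : Function.Bijective f := by
    constructor
    · rintro (t | ⟨a, b⟩) (s | ⟨a', b'⟩) hfeq
      · simp only [f, Sum.elim_inl, Subtype.mk.injEq, Prod.mk.injEq] at hfeq
        obtain ⟨h2, h3⟩ := hfeq
        have h2' : t ^ 2 = s ^ 2 := Units.ext (by push_cast; exact h2)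
        have h3' : t ^ 3 = s ^ 3 := Units.ext (by push_cast; exact h3)
        have hts : t = s := by
          have := congrArg₂ (· * ·) h3' (congrArg (·⁻¹) h2')
          simpa [pow_succ, mul_assoc] using this
        rw [hts]
      · exfalso
        simp only [f, Sum.elim_inl, Sum.elim_inr, Subtype.mk.injEq, Prod.mk.injEq] at hfeq
        obtain ⟨h2, -⟩ := hfeq
        have hu : IsUnit (((p ^ 2 * a'.val : ℕ) : R)) := by
          rw [← h2]; exact (IsUnit.pow 2 t.isUnit)
        rw [ZMod.isUnit_iff_coprime] at hu
        have hpd : p ∣ p ^ 2 * a'.val := Dvd.dvd.mul_right (dvd_pow_self _ (by norm_num)) _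
        have hpd6 : p ∣ p ^ 6 := dvd_pow_self _ (by norm_num)
        exact hp.one_lt.ne' (Nat.Coprime.eq_one_of_dvd
          (Nat.Coprime.coprime_dvd_left hpd (Nat.Coprime.coprime_dvd_right hpd6 hu)) dvd_rfl)
      · exfalso
        simp only [f, Sum.elim_inl, Sum.elim_inr, Subtype.mk.injEq, Prod.mk.injEq] at hfeq
        obtain ⟨h2, -⟩ := hfeq
        have hu : IsUnit (((p ^ 2 * a.val : ℕ) : R)) := by
          rw [h2]; exact (IsUnit.pow 2 s.isUnit)
        rw [ZMod.isUnit_iff_coprime] at hu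
        have hpd : p ∣ p ^ 2 * a.val := Dvd.dvd.mul_right (dvd_pow_self _ (by norm_num)) _
        have hpd6 : p ∣ p ^ 6 := dvd_pow_self _ (by norm_num)
        exact hp.one_lt.ne' (Nat.Coprime.eq_one_of_dvd
          (Nat.Coprime.coprime_dvd_left hpd (Nat.Coprime.coprime_dvd_right hpd6 hu)) dvd_rfl)
      · simp only [f, Sum.elim_inr, Subtype.mk.injEq, Prod.mk.injEq] at hfeq
        obtain ⟨h2, h3⟩ := hfeq
        have ha : a = a' := aux_inj hp (k := 2) (m := 4) h2
        have hb : b = b' := aux_inj hp (k := 3) (m := 3) h3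
        rw [ha, hb]
    · rintro ⟨⟨x, y⟩, hsol⟩
      by_cases hx : IsUnit x
      · have hy : IsUnit y := by
          have hu : IsUnit (y ^ 2) := by rw [hsol]; exact hx.pow 3
          exact (isUnit_pow_iff (by norm_num)).mp hu
        obtain ⟨u, hu⟩ := hx
        obtain ⟨v, hv⟩ := hy
        have huv : v ^ 2 = u ^ 3 := Units.ext (by push_cast [hu, hv]; exact hsol)
        refine ⟨Sum.inl (v * u⁻¹), ?_⟩
        have ht2 : (v * u⁻¹) ^ 2 = u := by
          rw [mul_pow, huv, pow_succ' u 2, inv_pow,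
            mul_assoc, mul_inv_cancel]
          simp
        have ht3 : (v * u⁻¹) ^ 3 = v := by
          rw [mul_pow, pow_succ' v 2, huv, inv_pow,
            mul_assoc, mul_inv_cancel]
          simp
        simp only [f, Sum.elim_inl, Subtype.mk.injEq, Prod.mk.injEq]
        constructor
        · rw [← Units.val_pow_eq_pow_val, ht2]; exact hu
        · rw [← Units.val_pow_eq_pow_val, ht3]; exact hv
      · obtain ⟨hxd, hyd⟩ := aux_classify hp x y hsol hx
        obtain ⟨X1, hX1⟩ := hxd
        obtain ⟨Y1, hY1⟩ := hyd
        have hX1lt : X1 < p ^ 4 := by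
          have hlt := ZMod.val_lt x
          rw [hX1] at hlt
          have hp2 : 0 < p ^ 2 := pow_pos hp.pos 2
          have hlt2 : p ^ 2 * X1 < p ^ 2 * p ^ 4 := by
            calc p ^ 2 * X1 < p ^ 6 := hlt
            _ = p ^ 2 * p ^ 4 := by ring
          exact lt_of_mul_lt_mul_left hlt2 (le_of_lt hp2)
        have hY1lt : Y1 < p ^ 3 := by
          have hlt := ZMod.val_lt y
          rw [hY1] at hlt
          have hp3 : 0 < p ^ 3 := pow_pos hp.pos 3
          have hlt2 : p ^ 3 * Y1 < p ^ 3 * p ^ 3 := by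
            calc p ^ 3 * Y1 < p ^ 6 := hlt
            _ = p ^ 3 * p ^ 3 := by ring
          exact lt_of_mul_lt_mul_left hlt2 (le_of_lt hp3)
        refine ⟨Sum.inr ((X1 : ZMod (p ^ 4)), (Y1 : ZMod (p ^ 3))), ?_⟩
        simp only [f, Sum.elim_inr, Subtype.mk.injEq, Prod.mk.injEq]
        rw [ZMod.val_cast_of_lt hX1lt, ZMod.val_cast_of_lt hY1lt]
        constructor
        · rw [← hX1]; exact ZMod.natCast_rightInverse x
        · rw [← hY1]; exact ZMod.natCast_rightInverse y
  have hcard := Nat.card_congr (Equiv.ofBijective f hfbij)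
  rw [← hcard, Nat.card_sum, Nat.card_prod, Nat.card_zmod, Nat.card_zmod]
  rw [Nat.card_eq_fintype_card, ZMod.card_units_eq_totient, Nat.totient_prime_pow hp (by norm_num)]
  norm_num
  have ha : p - 1 + 1 = p := Nat.succ_pred_eq_of_pos hp.pos
  have hb0 : 0 < p ^ 2 + p := by have := hp.pos; omega
  have hb : p ^ 2 + p - 1 + 1 = p ^ 2 + p := Nat.succ_pred_eq_of_pos hb0
  apply Nat.add_right_cancel (m := p ^ 5)
  calc p ^ 5 * (p - 1) + p ^ 4 * p ^ 3 + p ^ 5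
      = p ^ 5 * ((p - 1) + 1) + p ^ 4 * p ^ 3 := by ring
    _ = p ^ 5 * p + p ^ 4 * p ^ 3 := by rw [ha]
    _ = p ^ 5 * (p ^ 2 + p) := by ring
    _ = p ^ 5 * ((p ^ 2 + p - 1) + 1) := by rw [hb]
    _ = p ^ 5 * (p ^ 2 + p - 1) + p ^ 5 := by ring
end

section
/- For the cuspidal cubic f = y^2 − x^3 and a prime p, the Igusa generating series J_p(T) = ∑_{n≥0} F_n T^n, where F_n = #{(x,y) ∈ (Z/p^{n+1}Z)^2 : y^2 = x^3}, satisfies J_p(T)·(1 − p^7 T^6)(1 − pT) = p·(1 + (p−1)T + (p^6 − p^5)T^5 − p^7 T^6) as formal power series over Q. -/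
/-!
Write `N_m` for the number of solutions of `y² = x³` modulo `p^m` and split them according to
whether `x` is a unit. The unit solutions are exactly the pairs `(u², u³)` with `u` a unit, so
there are `φ(p^m) = p^(m-1)(p-1)` of them. If `p ∣ x`, comparing `p`-adic valuations in
`y² ≡ x³` shows that for `m ≤ 6` these solutions are exactly the pairs with `p^⌈m/3⌉ ∣ x` and
`p^⌈m/2⌉ ∣ y`, and that for `m ≥ 6` they are the pairs `(p²a, p³b)` with
`b² ≡ a³ (mod p^(m-6))`, where `a` is taken mod `p^(m-4)` and `b` mod `p^(m-3)`; there are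
`p⁷ N_{m-6}` of the latter. The recursion `N_{m+6} = p^(m+5)(p-1) + p⁷ N_m` together with
`N_1, …, N_6` gives the identity coefficientwise.
-/

open PowerSeries

open Finset

theorem Nat.card_subtype_eq_card_and_add_card_and_not {α : Type*} [Finite α] (P Q : α → Prop) :
    Nat.card {x // P x} = Nat.card {x // P x ∧ Q x} + Nat.card {x // P x ∧ ¬Q x} := by
  classical
  have := Fintype.ofFinite α
  simp only [Nat.card_eq_fintype_card, Fintype.card_subtype]
  rw [← filter_filter, ← filter_filter, card_filter_add_card_filter_not]

theorem div_pow_two_and_three_of_sq_eq_cube {G : Type*} [CommGroup G] {a b : G}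
    (h : b ^ 2 = a ^ 3) :
    (b / a) ^ 2 = a ∧ (b / a) ^ 3 = b := by
  constructor
  · rw [div_pow, h, pow_succ, mul_div_cancel_left]
  · rw [div_pow, pow_succ b 2, h, mul_div_cancel_left]

theorem card_sq_eq_cube_and_isUnit (M : Type*) [CommMonoid M] :
    Nat.card {z : M × M // z.2 ^ 2 = z.1 ^ 3 ∧ IsUnit z.1} = Nat.card Mˣ := by
  refine (Nat.card_eq_of_bijective
    (fun u : Mˣ => ⟨(↑(u ^ 2), ↑(u ^ 3)), by simp only [← Units.val_pow_eq_pow_val, ← pow_mul],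
      (u ^ 2).isUnit⟩) ⟨fun u v huv => ?_, ?_⟩).symm
  · have h2 : u ^ 2 = v ^ 2 := Units.ext (congrArg (·.1.1) huv)
    have h3 : u ^ 3 = v ^ 3 := Units.ext (congrArg (·.1.2) huv)
    calc u = u ^ 3 / u ^ 2 := by rw [pow_succ, mul_div_cancel_left]
      _ = v := by rw [h2, h3, pow_succ, mul_div_cancel_left]
  · rintro ⟨⟨x, y⟩, hxy, hx⟩
    have hy : IsUnit y := (isUnit_pow_iff two_ne_zero).mp (hxy ▸ hx.pow 3)
    obtain ⟨h2, h3⟩ := div_pow_two_and_three_of_sq_eq_cube (a := hx.unit) (b := hy.unit)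
      (Units.ext (by simpa using hxy))
    exact ⟨hy.unit / hx.unit, by ext <;> simp only [h2, h3, IsUnit.unit_spec]⟩

theorem Nat.Prime.pow_dvd_of_pow_dvd_pow {p : ℕ} (hp : p.Prime) {Z : ℤ} {i j k : ℕ}
    (h : (p : ℤ) ^ j ∣ Z ^ k) (hijk : k * i < j + k) : (p : ℤ) ^ i ∣ Z := by
  have := Fact.mk hp
  rcases eq_or_ne Z 0 with rfl | hZ
  · simp
  rw [padicValInt_dvd_iff] at h ⊢
  simp only [padicValInt, Int.natAbs_pow, padicValNat.pow, pow_eq_zero_iff', hZ, false_and,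
    false_or] at h ⊢
  by_contra! hlt
  nlinarith

theorem ZMod.val_add_mul_div {a : ℕ} [NeZero a] (x : ZMod a) (i : ℕ) : (x.val + a * i) / a = i := by
  rw [Nat.add_mul_div_left _ _ (NeZero.pos a), Nat.div_eq_of_lt x.val_lt, zero_add]

theorem card_filter_range_mul_product {a b : ℕ} [NeZero a] [NeZero b] (k l : ℕ)
    (Q : ZMod a × ZMod b → Prop) [DecidablePred Q] :
    #{z ∈ range (a * k) ×ˢ range (b * l) | Q ((z.1 : ZMod a), (z.2 : ZMod b))} =
      Nat.card {z // Q z} * (k * l) := by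
  calc _ = #(univ.filter Q ×ˢ (range k ×ˢ range l)) := by
        refine card_nbij' (fun z => ((z.1, z.2), (z.1 / a, z.2 / b)))
          (fun w : (ZMod a × ZMod b) × ℕ × ℕ => (w.1.1.val + a * w.2.1, w.1.2.val + b * w.2.2))
          ?_ ?_ ?_ ?_
        · intro z hz
          simp only [mem_coe, mem_filter, mem_product, mem_range, mem_univ, true_and] at hz ⊢
          exact ⟨hz.2, Nat.div_lt_of_lt_mul hz.1.1, Nat.div_lt_of_lt_mul hz.1.2⟩
        · rintro ⟨⟨x, y⟩, i, j⟩ hw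
          simp only [mem_coe, mem_filter, mem_product, mem_range, mem_univ, true_and] at hw ⊢
          have hx := x.val_lt
          have hy := y.val_lt
          exact ⟨⟨by nlinarith, by nlinarith⟩, by simpa using hw.1⟩
        · intro z _
          simp [Nat.mod_add_div]
        · rintro ⟨⟨x, y⟩, i, j⟩ _
          simp [ZMod.val_add_mul_div]
    _ = _ := by
      rw [card_product, card_product, card_range, card_range, Nat.card_eq_fintype_card,
        Fintype.card_subtype]

theorem card_filter_dvd_range_mul_product (a b k l : ℕ) [NeZero a] [NeZero b] :
    #{z ∈ range (a * k) ×ˢ range (b * l) | a ∣ z.1 ∧ b ∣ z.2} = k * l := by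
  have h := card_filter_range_mul_product k l fun z : ZMod a × ZMod b => z = 0
  rw [Nat.card_unique, one_mul] at h
  simpa only [Prod.ext_iff, Prod.fst_zero, Prod.snd_zero, ZMod.natCast_eq_zero_iff] using h

theorem ZMod.natCast_sq_eq_natCast_pow_three_iff (n X Y : ℕ) :
    (Y : ZMod n) ^ 2 = (X : ZMod n) ^ 3 ↔ (n : ℤ) ∣ (Y : ℤ) ^ 2 - (X : ℤ) ^ 3 := by
  rw [← sub_eq_zero, ← ZMod.intCast_zmod_eq_zero_iff_dvd]
  push_cast
  rfl

theorem pow_dvd_sq_sub_cube {R : Type*} [CommRing R] {a X Y : R} {c d m : ℕ}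
    (hc : m ≤ 3 * c) (hd : m ≤ 2 * d) (hX : a ^ c ∣ X) (hY : a ^ d ∣ Y) : a ^ m ∣ Y ^ 2 - X ^ 3 :=
  dvd_sub ((pow_dvd_pow a hd).trans (by simpa [← pow_mul, mul_comm] using pow_dvd_pow_of_dvd hY 2))
    ((pow_dvd_pow a hc).trans (by simpa [← pow_mul, mul_comm] using pow_dvd_pow_of_dvd hX 3))

noncomputable def cuspCount (n : ℕ) : ℕ := Nat.card {z : ZMod n × ZMod n // z.2 ^ 2 = z.1 ^ 3}

/-- Residues in `[0, p^m)` of the solutions modulo `p^m` reducing to the cusp `(0, 0)` mod `p`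
(`p ∣ x` forces `p ∣ y`). -/
def solutionsOverCusp (p m : ℕ) : Finset (ℕ × ℕ) :=
  {z ∈ range (p ^ m) ×ˢ range (p ^ m) | (p : ℤ) ^ m ∣ (z.2 : ℤ) ^ 2 - (z.1 : ℤ) ^ 3 ∧ p ∣ z.1}

section Cusp

variable {p : ℕ}

theorem card_sq_eq_cube_and_not_isUnit (hp : p.Prime) {m : ℕ} (hm : m ≠ 0) :
    Nat.card {z : ZMod (p ^ m) × ZMod (p ^ m) // z.2 ^ 2 = z.1 ^ 3 ∧ ¬IsUnit z.1} =
      #(solutionsOverCusp p m) := by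
  have := NeZero.mk (pow_ne_zero m hp.ne_zero)
  classical
  have h := card_filter_range_mul_product (a := p ^ m) (b := p ^ m) 1 1
    fun z => z.2 ^ 2 = z.1 ^ 3 ∧ ¬IsUnit z.1
  simp only [mul_one, ZMod.natCast_sq_eq_natCast_pow_three_iff, Nat.cast_pow,
    ZMod.isUnit_iff_coprime, Nat.coprime_pow_right_iff (Nat.pos_of_ne_zero hm),
    Nat.coprime_comm, hp.coprime_iff_not_dvd, not_not] at h
  exact h.symm

theorem cuspCount_pow_eq (hp : p.Prime) {m : ℕ} (hm : m ≠ 0) :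
    cuspCount (p ^ m) = p ^ (m - 1) * (p - 1) + #(solutionsOverCusp p m) := by
  have := NeZero.mk (pow_ne_zero m hp.ne_zero)
  rw [cuspCount, Nat.card_subtype_eq_card_and_add_card_and_not _ fun z => IsUnit z.1,
    card_sq_eq_cube_and_isUnit, card_sq_eq_cube_and_not_isUnit hp hm, Nat.card_eq_fintype_card,
    ZMod.card_units_eq_totient, Nat.totient_prime_pow hp (Nat.pos_of_ne_zero hm)]

theorem pow_dvd_of_pow_dvd_sq_sub_cube (hp : p.Prime) {X Y : ℤ} {m : ℕ} (hm : m ≤ 6)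
    (h : (p : ℤ) ^ m ∣ Y ^ 2 - X ^ 3) (hX : (p : ℤ) ∣ X) :
    (p : ℤ) ^ ((m + 2) / 3) ∣ X ∧ (p : ℤ) ^ ((m + 1) / 2) ∣ Y := by
  have sq_of_cube : ∀ j ≤ m, (p : ℤ) ^ j ∣ X ^ 3 → (p : ℤ) ^ j ∣ Y ^ 2 := fun j hj hX3 => by
    simpa using dvd_add ((pow_dvd_pow _ hj).trans h) hX3
  have cube_of_sq : ∀ j ≤ m, (p : ℤ) ^ j ∣ Y ^ 2 → (p : ℤ) ^ j ∣ X ^ 3 := fun j hj hY2 => by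
    simpa using dvd_sub hY2 ((pow_dvd_pow _ hj).trans h)
  have hX3 : (p : ℤ) ^ 3 ∣ X ^ 3 := pow_dvd_pow_of_dvd hX 3
  rcases le_or_gt m 3 with hm3 | hm3
  · refine ⟨(pow_dvd_pow _ (by omega)).trans (pow_one (p : ℤ) ▸ hX), ?_⟩
    exact hp.pow_dvd_of_pow_dvd_pow (sq_of_cube m le_rfl ((pow_dvd_pow _ hm3).trans hX3))
      (by omega)
  · have hY : (p : ℤ) ^ 2 ∣ Y := hp.pow_dvd_of_pow_dvd_pow (sq_of_cube 3 hm3.le hX3) (by norm_num)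
    have hY4 : (p : ℤ) ^ 4 ∣ Y ^ 2 := by simpa [← pow_mul] using pow_dvd_pow_of_dvd hY 2
    have hX2 : (p : ℤ) ^ 2 ∣ X := hp.pow_dvd_of_pow_dvd_pow (cube_of_sq 4 hm3 hY4) (by norm_num)
    have hX6 : (p : ℤ) ^ 6 ∣ X ^ 3 := by simpa [← pow_mul] using pow_dvd_pow_of_dvd hX2 3
    refine ⟨by rwa [show (m + 2) / 3 = 2 by omega], ?_⟩
    exact hp.pow_dvd_of_pow_dvd_pow (sq_of_cube m le_rfl ((pow_dvd_pow _ hm).trans hX6))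
      (by omega)

theorem solutionsOverCusp_eq_of_le_six (hp : p.Prime) {m : ℕ} (hm1 : 1 ≤ m) (hm : m ≤ 6) :
    solutionsOverCusp p m =
      {z ∈ range (p ^ m) ×ˢ range (p ^ m) | p ^ ((m + 2) / 3) ∣ z.1 ∧ p ^ ((m + 1) / 2) ∣ z.2} := by
  refine filter_congr fun z _ => ?_
  have cast_dvd : ∀ {j n : ℕ}, p ^ j ∣ n ↔ (p : ℤ) ^ j ∣ (n : ℤ) := by
    intro j n; exact_mod_cast Int.natCast_dvd_natCast.symm
  rw [cast_dvd, cast_dvd, ← Int.natCast_dvd_natCast]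
  constructor
  · rintro ⟨h, hX⟩
    exact pow_dvd_of_pow_dvd_sq_sub_cube hp hm h hX
  · rintro ⟨hX, hY⟩
    exact ⟨pow_dvd_sq_sub_cube (by omega) (by omega) hX hY,
      (dvd_pow_self _ (by omega)).trans hX⟩

theorem card_solutionsOverCusp_of_le_six (hp : p.Prime) {m : ℕ} (hm1 : 1 ≤ m) (hm : m ≤ 6) :
    #(solutionsOverCusp p m) = p ^ (m - (m + 2) / 3) * p ^ (m - (m + 1) / 2) := by
  have := NeZero.mk hp.ne_zero
  have h := card_filter_dvd_range_mul_product (p ^ ((m + 2) / 3)) (p ^ ((m + 1) / 2))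
    (p ^ (m - (m + 2) / 3)) (p ^ (m - (m + 1) / 2))
  rw [← pow_add, ← pow_add, Nat.add_sub_cancel' (by omega), Nat.add_sub_cancel' (by omega)] at h
  rw [solutionsOverCusp_eq_of_le_six hp hm1 hm, h]

theorem mk_mem_solutionsOverCusp_add_six_iff (hp : p.Prime) (e A B : ℕ) :
    (p ^ 2 * A, p ^ 3 * B) ∈ solutionsOverCusp p (e + 6) ↔
      (A < p ^ (e + 4) ∧ B < p ^ (e + 3)) ∧ (p : ℤ) ^ e ∣ (B : ℤ) ^ 2 - (A : ℤ) ^ 3 := by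
  have hp0 := hp.pos
  have hA : p ^ 2 * A < p ^ (e + 6) ↔ A < p ^ (e + 4) := by
    rw [show e + 6 = 2 + (e + 4) by omega, pow_add, Nat.mul_lt_mul_left (by positivity)]
  have hB : p ^ 3 * B < p ^ (e + 6) ↔ B < p ^ (e + 3) := by
    rw [show e + 6 = 3 + (e + 3) by omega, pow_add, Nat.mul_lt_mul_left (by positivity)]
  have hdvd : (p : ℤ) ^ (e + 6) ∣ ((p ^ 3 * B : ℕ) : ℤ) ^ 2 - ((p ^ 2 * A : ℕ) : ℤ) ^ 3 ↔
      (p : ℤ) ^ e ∣ (B : ℤ) ^ 2 - (A : ℤ) ^ 3 := by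
    rw [show ((p ^ 3 * B : ℕ) : ℤ) ^ 2 - ((p ^ 2 * A : ℕ) : ℤ) ^ 3 =
        (p : ℤ) ^ 6 * ((B : ℤ) ^ 2 - (A : ℤ) ^ 3) by push_cast; ring,
      pow_add, mul_comm ((p : ℤ) ^ e), mul_dvd_mul_iff_left (by positivity)]
  simp only [solutionsOverCusp, mem_filter, mem_product, mem_range, hA, hB, hdvd,
    Dvd.dvd.mul_right (dvd_pow_self p two_ne_zero), and_true]

theorem card_solutionsOverCusp_add_six (hp : p.Prime) (e : ℕ) :
    #(solutionsOverCusp p (e + 6)) = p ^ 7 * cuspCount (p ^ e) := by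
  have hp0 := hp.pos
  have hlift : #{z ∈ range (p ^ (e + 4)) ×ˢ range (p ^ (e + 3)) |
      (p : ℤ) ^ e ∣ (z.2 : ℤ) ^ 2 - (z.1 : ℤ) ^ 3} = #(solutionsOverCusp p (e + 6)) := by
    refine card_nbij (fun z => (p ^ 2 * z.1, p ^ 3 * z.2)) ?_ ?_ ?_
    · rintro ⟨A, B⟩ h
      simpa [mk_mem_solutionsOverCusp_add_six_iff hp] using h
    · rintro ⟨A, B⟩ - ⟨A', B'⟩ - h
      simp only [Prod.mk.injEq] at h ⊢
      exact ⟨Nat.eq_of_mul_eq_mul_left (by positivity) h.1,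
        Nat.eq_of_mul_eq_mul_left (by positivity) h.2⟩
    · rintro ⟨X, Y⟩ h
      obtain ⟨-, hdvd, hpX⟩ := mem_filter.mp (mem_coe.mp h)
      obtain ⟨hX, hY⟩ := pow_dvd_of_pow_dvd_sq_sub_cube hp (m := 6) le_rfl
        ((pow_dvd_pow _ (by omega)).trans hdvd) (Int.natCast_dvd_natCast.mpr hpX)
      obtain ⟨A, rfl⟩ : p ^ 2 ∣ X := by exact_mod_cast hX
      obtain ⟨B, rfl⟩ : p ^ 3 ∣ Y := by exact_mod_cast hY
      exact ⟨(A, B), by simpa [mk_mem_solutionsOverCusp_add_six_iff hp] using h, rfl⟩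
  have := NeZero.mk (pow_ne_zero e hp.ne_zero)
  have h := card_filter_range_mul_product (a := p ^ e) (b := p ^ e) (p ^ 4) (p ^ 3)
    fun z => z.2 ^ 2 = z.1 ^ 3
  simp only [ZMod.natCast_sq_eq_natCast_pow_three_iff, Nat.cast_pow, ← pow_add] at h
  rw [← hlift, h, cuspCount, mul_comm]

end Cusp

theorem PowerSeries.coeff_mul_one_sub_C_mul_X_pow {R : Type*} [CommRing R] (φ : R⟦X⟧) (a : R)
    (k n : ℕ) :
    coeff n (φ * (1 - C a * X ^ k)) = coeff n φ - if k ≤ n then a * coeff (n - k) φ else 0 := by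
  rw [mul_sub, mul_one, map_sub, mul_left_comm, coeff_C_mul, coeff_mul_X_pow']
  split_ifs <;> simp

theorem PowerSeries.mk_mul_eq_of_cusp_recurrence {R : Type*} [CommRing R] (q : R) (f : ℕ → R)
    (h0 : f 0 = q) (hmid : ∀ n, 1 ≤ n → n ≤ 4 → f n = q ^ n * (q - 1) + q ^ (n + 1))
    (h5 : f 5 = q ^ 5 * (q - 1) + q ^ 7)
    (hrec : ∀ n, f (n + 6) = q ^ (n + 6) * (q - 1) + q ^ 7 * f n) :
    mk f * ((1 - C (q ^ 7) * X ^ 6) * (1 - C q * X)) =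
      C q * (1 + C (q - 1) * X + C (q ^ 6 - q ^ 5) * X ^ 5 - C (q ^ 7) * X ^ 6) := by
  ext n
  rw [← mul_assoc, show (1 - C q * X : R⟦X⟧) = 1 - C q * X ^ 1 by rw [pow_one],
    coeff_mul_one_sub_C_mul_X_pow,
    coeff_mul_one_sub_C_mul_X_pow, coeff_mul_one_sub_C_mul_X_pow]
  simp only [coeff_mk, mul_add, mul_sub, mul_one, LinearMap.map_add, LinearMap.map_sub,
    coeff_C_mul, coeff_X, coeff_X_pow]
  rcases n with _ | _ | _ | _ | _ | _ | _ | n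
  · simp [h0]
  · simp [h0, hmid 1]; ring
  · simp [hmid 1, hmid 2]; ring
  · simp [hmid 2, hmid 3]; ring
  · simp [hmid 3, hmid 4]; ring
  · simp [hmid 4, h5]; ring
  · simp [h5, hrec 0, h0]; ring
  · simp [hrec n, hrec (n + 1)]; ring

/-- For `f = y² − x³`, with `F n` the number of solutions of `y² ≡ x³ (mod p^(n+1))`
in `(ℤ/p^(n+1)ℤ)²`, the Igusa generating series `J_p(T) = ∑ Fₙ Tⁿ` satisfies
`J_p(T)·(1 − p⁷T⁶)(1 − pT) = p·(1 + (p−1)T + (p⁶−p⁵)T⁵ − p⁷T⁶)` in `ℚ[[T]]`. -/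
theorem stmt_13 (p : ℕ) (hp : p.Prime)
    (F : ℕ → ℕ)
    (hF : ∀ n, F n =
      Nat.card {z : ZMod (p ^ (n + 1)) × ZMod (p ^ (n + 1)) // z.2 ^ 2 = z.1 ^ 3}) :
    (PowerSeries.mk fun n => (F n : ℚ)) *
        ((1 - C ((p : ℚ) ^ 7) * X ^ 6) * (1 - C (p : ℚ) * X)) =
      C (p : ℚ) *
        (1 + C ((p : ℚ) - 1) * X + C ((p : ℚ) ^ 6 - (p : ℚ) ^ 5) * X ^ 5 -
          C ((p : ℚ) ^ 7) * X ^ 6) := by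
  have hsplit : ∀ n, (F n : ℚ) = p ^ n * (p - 1) + #(solutionsOverCusp p (n + 1)) := by
    intro n
    rw [hF n, ← cuspCount, cuspCount_pow_eq hp n.succ_ne_zero]
    push_cast [Nat.cast_sub hp.one_le]
    simp
  apply mk_mul_eq_of_cusp_recurrence
  · rw [hsplit, card_solutionsOverCusp_of_le_six hp le_rfl (by norm_num)]
    norm_num
  · intro n h1 h4
    rw [hsplit, card_solutionsOverCusp_of_le_six hp (by omega) (by omega), ← pow_add,
      show n + 1 - (n + 1 + 2) / 3 + (n + 1 - (n + 1 + 1) / 2) = n + 1 by omega]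
    push_cast
    ring
  · rw [hsplit, card_solutionsOverCusp_of_le_six hp (by norm_num) (by norm_num), ← pow_add]
    norm_num
  · intro n
    rw [hsplit, show n + 6 + 1 = n + 1 + 6 from rfl, card_solutionsOverCusp_add_six hp,
      cuspCount, ← hF n]
    push_cast
    ring
end
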